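/- arXiv:1412.1754 — 7 statements merged into one kernel-verified Lean document; each statement's English description precedes it below -/
import Mathlib

section
/- For real parameters a, b with 0 < b < a, the polynomial equation 3s^8 - 4(a^2+b^2)s^6 + 6a^2b^2 s^4 - a^4 b^4 = 0 has exactly one root s in the open interval (a, +∞). -/
/-! The derivative `24 s³ (s² - a²) (s² - b²)` is positive for `s > a > b > 0`, so the polynomial is
strictly increasing on `[a, ∞)`. It starts there at `-a⁴ (a² - b²)² < 0` and tends to `+∞`, hence it
crosses zero exactly once. -/

open Filter Set Polynomial

theorem existsUnique_mem_Ioi_eq_of_strictMonoOn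
    {α δ : Type*} [ConditionallyCompleteLinearOrder α] [TopologicalSpace α] [OrderTopology α]
    [DenselyOrdered α] [LinearOrder δ] [TopologicalSpace δ] [OrderClosedTopology δ] [NoMaxOrder δ]
    {f : α → δ} {a : α} {c : δ} (hcont : ContinuousOn f (Ici a)) (hmono : StrictMonoOn f (Ici a))
    (hfa : f a < c) (htop : Tendsto f atTop atTop) :
    ∃! s, s ∈ Ioi a ∧ f s = c := by
  obtain ⟨N, hcN, haN⟩ := ((htop.eventually_gt_atTop c).and (eventually_ge_atTop a)).exists
  obtain ⟨s, hs, hfs⟩ :=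
    intermediate_value_Ioo haN (hcont.mono Icc_subset_Ici_self) (show c ∈ Ioo (f a) (f N) from ⟨hfa, hcN⟩)
  refine ⟨s, ⟨hs.1, hfs⟩, fun t ⟨ht, hft⟩ => ?_⟩
  exact hmono.injOn (mem_Ici.mpr ht.le) (mem_Ici.mpr hs.1.le) (hft.trans hfs.symm)

def kovalevskayaCuspPoly (a b s : ℝ) : ℝ :=
  3*s^8 - 4*(a^2+b^2)*s^6 + 6*a^2*b^2*s^4 - a^4*b^4

namespace kovalevskayaCuspPoly

variable (a b : ℝ)

theorem hasDerivAt (s : ℝ) :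
    HasDerivAt (kovalevskayaCuspPoly a b) (24*s^3*(s^2-a^2)*(s^2-b^2)) s := by
  have h8 := (hasDerivAt_pow 8 s).const_mul (3:ℝ)
  have h6 := (hasDerivAt_pow 6 s).const_mul (4*(a^2+b^2))
  have h4 := (hasDerivAt_pow 4 s).const_mul (6*a^2*b^2)
  exact (((h8.sub h6).add h4).sub_const (a^4*b^4)).congr_deriv (by push_cast; ring)

theorem continuous : Continuous (kovalevskayaCuspPoly a b) :=
  continuous_iff_continuousAt.mpr fun s => (hasDerivAt a b s).continuousAt

theorem apply_self : kovalevskayaCuspPoly a b a = -(a^4*(a^2-b^2)^2) := by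
  unfold kovalevskayaCuspPoly
  ring

theorem strictMonoOn_Ici {a b : ℝ} (ha : 0 ≤ a) (hab : b^2 ≤ a^2) :
    StrictMonoOn (kovalevskayaCuspPoly a b) (Ici a) := by
  refine strictMonoOn_of_deriv_pos (convex_Ici a) (continuous a b).continuousOn fun s hs => ?_
  rw [interior_Ici] at hs
  have hs : a < s := hs
  have hsa : 0 < s^2 - a^2 := by nlinarith
  have hsb : 0 < s^2 - b^2 := by linarith
  have hs0 : 0 < s := ha.trans_lt hs
  rw [(hasDerivAt a b s).deriv]
  positivity

theorem tendsto_atTop : Tendsto (kovalevskayaCuspPoly a b) atTop atTop := by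
  unfold kovalevskayaCuspPoly
  let P : ℝ[X] := C 3 * X^8 - C (4*(a^2+b^2)) * X^6 + C (6*a^2*b^2) * X^4 - C (a^4*b^4)
  have hdeg : P.natDegree = 8 := by simp only [P]; compute_degree!
  have hlead : P.leadingCoeff = 3 := by
    rw [leadingCoeff, hdeg]
    simp only [P, coeff_sub, coeff_add, coeff_C_mul, coeff_X_pow, coeff_C]
    norm_num
  have hP0 : P ≠ 0 := by simp [← leadingCoeff_eq_zero, hlead]
  have h := P.tendsto_atTop_of_leadingCoeff_nonneg
    (by rw [degree_eq_natDegree hP0, hdeg]; norm_num) (by rw [hlead]; norm_num)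
  simpa [P] using h

end kovalevskayaCuspPoly

theorem stmt_0 (a b : ℝ) (hb : 0 < b) (hba : b < a) :
    ∃! s : ℝ, s ∈ Set.Ioi a ∧
      3*s^8 - 4*(a^2+b^2)*s^6 + 6*a^2*b^2*s^4 - a^4*b^4 = 0 := by
  have ha : 0 < a := hb.trans hba
  have hab : b^2 < a^2 := by nlinarith
  have hneg : kovalevskayaCuspPoly a b a < 0 := by
    rw [kovalevskayaCuspPoly.apply_self, neg_lt_zero]
    have : 0 < a^2 - b^2 := by linarith
    positivity
  exact existsUnique_mem_Ioi_eq_of_strictMonoOn (kovalevskayaCuspPoly.continuous a b).continuousOn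
    (kovalevskayaCuspPoly.strictMonoOn_Ici ha.le hab.le) hneg (kovalevskayaCuspPoly.tendsto_atTop a b)
end

section
/- For 0 < b < a, the equation √((s²−a²)(s²−b²))/s = √(s²−b²) − √(s²−a²) has a unique solution s in (a, +∞), and this solution coincides with the unique root in (a,+∞) of 3s^8 − 4(a²+b²)s^6 + 6a²b²s^4 − a⁴b⁴ = 0. -/
/-!
With `u = √(s² - a²)` and `v = √(s² - b²)` the equation reads `u v = s (v - u)`. For `s > a` both
sides are nonnegative, so it may be squared; using `u² + v² = 2 s² - a² - b²` this becomes
`2 s² u v = s⁴ - a² b²`, whose sides are again nonnegative, and squaring once more gives the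
octic `3 s⁸ - 4 (a² + b²) s⁶ + 6 a² b² s⁴ - a⁴ b⁴ = 0`. The octic has derivative
`24 s³ (s² - a²) (s² - b²) > 0` on `(a, ∞)`, is negative at `a` and positive at `2 a`, so it has
exactly one root there.
-/

open Set

section

def criticalPoly (a b s : ℝ) : ℝ :=
  3*s^8 - 4*(a^2+b^2)*s^6 + 6*a^2*b^2*s^4 - a^4*b^4

variable {a b : ℝ}

lemma criticalPoly_eq (a b s : ℝ) :
    criticalPoly a b s = (2*s^2)^2 * ((s^2-a^2)*(s^2-b^2)) - (s^4 - a^2*b^2)^2 := by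
  unfold criticalPoly; ring

lemma continuous_criticalPoly (a b : ℝ) : Continuous (criticalPoly a b) := by
  unfold criticalPoly; fun_prop

lemma hasDerivAt_criticalPoly (a b s : ℝ) :
    HasDerivAt (criticalPoly a b) (24*s^3*((s^2-a^2)*(s^2-b^2))) s := by
  have h := ((((hasDerivAt_pow 8 s).const_mul 3).sub
    ((hasDerivAt_pow 6 s).const_mul (4*(a^2+b^2)))).add
    ((hasDerivAt_pow 4 s).const_mul (6*a^2*b^2))).sub_const (a^4*b^4)
  exact h.congr_deriv (by norm_num; ring)

lemma criticalPoly_strictMonoOn (ha : 0 ≤ a) (hba : b^2 ≤ a^2) :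
    StrictMonoOn (criticalPoly a b) (Ici a) := by
  refine strictMonoOn_of_deriv_pos (convex_Ici a) (continuous_criticalPoly a b).continuousOn ?_
  intro x hx
  rw [interior_Ici, mem_Ioi] at hx
  have hx0 : 0 < x := ha.trans_lt hx
  have hxa : 0 < x^2 - a^2 := sub_pos.2 (pow_lt_pow_left₀ hx ha two_ne_zero)
  have hxb : 0 < x^2 - b^2 := by linarith
  rw [(hasDerivAt_criticalPoly a b x).deriv]
  positivity

lemma criticalPoly_self_neg (ha : a ≠ 0) (hab : a^2 ≠ b^2) : criticalPoly a b a < 0 := by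
  have hne : a^2 * (a^2 - b^2) ≠ 0 := mul_ne_zero (pow_ne_zero 2 ha) (sub_ne_zero.2 hab)
  have h : criticalPoly a b a = -(a^2 * (a^2 - b^2))^2 := by rw [criticalPoly_eq]; ring
  rw [h, neg_lt_zero]
  exact sq_pos_of_ne_zero hne

lemma criticalPoly_two_mul_pos (ha : a ≠ 0) (hba : b^2 ≤ a^2) : 0 < criticalPoly a b (2*a) := by
  have h : criticalPoly a b (2*a) = a^4 * (512*(a^2)^2 - 160*a^2*b^2 - (b^2)^2) := by
    unfold criticalPoly; ring
  have ha2 : 0 < a^2 := by positivity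
  rw [h]
  exact mul_pos (by positivity) (by nlinarith [sq_nonneg b])

theorem existsUnique_criticalPoly_eq_zero (ha : 0 < a) (hba : b^2 < a^2) :
    ∃! s, s ∈ Ioi a ∧ criticalPoly a b s = 0 := by
  obtain ⟨s, hs, hroot⟩ : ∃ s ∈ Ioo a (2*a), criticalPoly a b s = 0 :=
    intermediate_value_Ioo (by linarith) (continuous_criticalPoly a b).continuousOn
      ⟨criticalPoly_self_neg ha.ne' hba.ne', criticalPoly_two_mul_pos ha.ne' hba.le⟩
  refine ⟨s, ⟨hs.1, hroot⟩, fun t ⟨ht, htroot⟩ => ?_⟩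
  exact (criticalPoly_strictMonoOn ha.le hba.le).injOn (Ioi_subset_Ici_self ht)
    (Ioi_subset_Ici_self hs.1) (htroot.trans hroot.symm)

theorem sqrt_mul_div_eq_sqrt_sub_sqrt_iff {s : ℝ} (hs : 0 < s) (hba : b^2 ≤ a^2)
    (has : a^2 ≤ s^2) :
    √((s^2-a^2)*(s^2-b^2)) / s = √(s^2-b^2) - √(s^2-a^2) ↔ criticalPoly a b s = 0 := by
  have hbs : b^2 ≤ s^2 := hba.trans has
  set u := √(s^2-a^2)
  set v := √(s^2-b^2)
  have hu2 : u^2 = s^2-a^2 := Real.sq_sqrt (sub_nonneg.2 has)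
  have hv2 : v^2 = s^2-b^2 := Real.sq_sqrt (sub_nonneg.2 hbs)
  have huv2 : (u*v)^2 = (s^2-a^2)*(s^2-b^2) := by rw [mul_pow, hu2, hv2]
  have huv : u ≤ v := Real.sqrt_le_sqrt (by linarith)
  have hs4 : a^2*b^2 ≤ s^2*s^2 := mul_le_mul has hbs (sq_nonneg b) (sq_nonneg s)
  rw [Real.sqrt_mul (sub_nonneg.2 has), div_eq_iff hs.ne']
  calc u*v = (v-u)*s
      ↔ (u*v)^2 = ((v-u)*s)^2 :=
        (sq_eq_sq₀ (by positivity) (mul_nonneg (sub_nonneg.2 huv) hs.le)).symm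
    _ ↔ 2*s^2*(u*v) = s^4 - a^2*b^2 := by
        constructor <;> intro h
        · linear_combination h - huv2 + s^2*hu2 + s^2*hv2
        · linear_combination h + huv2 - s^2*hu2 - s^2*hv2
    _ ↔ (2*s^2*(u*v))^2 = (s^4 - a^2*b^2)^2 :=
        (sq_eq_sq₀ (by positivity) (by linarith)).symm
    _ ↔ criticalPoly a b s = 0 := by
        rw [criticalPoly_eq, ← huv2, sub_eq_zero, mul_pow]

end

theorem stmt_1 (a b : ℝ) (hb : 0 < b) (hba : b < a) :
    (∃! s : ℝ, s ∈ Set.Ioi a ∧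
      Real.sqrt ((s^2-a^2)*(s^2-b^2)) / s
        = Real.sqrt (s^2-b^2) - Real.sqrt (s^2-a^2)) ∧
    (∀ s ∈ Set.Ioi a,
      (Real.sqrt ((s^2-a^2)*(s^2-b^2)) / s
        = Real.sqrt (s^2-b^2) - Real.sqrt (s^2-a^2))
      ↔ 3*s^8 - 4*(a^2+b^2)*s^6 + 6*a^2*b^2*s^4 - a^4*b^4 = 0) := by
  have ha : 0 < a := hb.trans hba
  have hba2 : b^2 < a^2 := pow_lt_pow_left₀ hba hb.le two_ne_zero
  have key : ∀ s ∈ Ioi a, (√((s^2-a^2)*(s^2-b^2)) / s = √(s^2-b^2) - √(s^2-a^2) ↔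
      criticalPoly a b s = 0) := fun s hs =>
    sqrt_mul_div_eq_sqrt_sub_sqrt_iff (ha.trans hs) hba2.le
      (pow_le_pow_left₀ ha.le (le_of_lt hs) 2)
  exact ⟨(existsUnique_congr fun s => and_congr_right (key s)).2
    (existsUnique_criticalPoly_eq_zero ha hba2), key⟩
end

section
/- For 0 < b < a, the function h(s) = 2s − (1/s)√((s²−a²)(s²−b²)) defined on [a, +∞) is differentiable on (a, +∞), and for s > a its derivative vanishes if and only if 3s^8 − 4(a²+b²)s^6 + 6a²b²s^4 − a⁴b⁴ = 0. -/
/-!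
With `r = √((s² - a²)(s² - b²))`, the derivative simplifies to `h'(s) = 2 - (s⁴ - a²b²) / (s² r)`.
For `s > a > b > 0` both `2 s² r` and `s⁴ - a²b²` are positive, so `h'(s) = 0` is equivalent to
`4 s⁴ r² = (s⁴ - a²b²)²`, and expanding `r²` turns this into the octic.
-/

noncomputable section

namespace Kovalevskaya

def energy (a b : ℝ) (s : ℝ) : ℝ :=
  2*s - (1/s) * Real.sqrt ((s^2-a^2)*(s^2-b^2))

variable {a b s : ℝ}

theorem hasDerivAt_energy (hs : s ≠ 0) (hP : 0 < (s^2-a^2)*(s^2-b^2)) :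
    HasDerivAt (energy a b)
      (2 - (s^4 - a^2*b^2) / (s^2 * Real.sqrt ((s^2-a^2)*(s^2-b^2)))) s := by
  have hP' : HasDerivAt (fun s : ℝ => (s^2-a^2)*(s^2-b^2)) (2*s*(2*s^2-a^2-b^2)) s := by
    refine (((hasDerivAt_pow 2 s).sub_const (a^2)).mul
      ((hasDerivAt_pow 2 s).sub_const (b^2))).congr_deriv ?_
    push_cast
    ring
  have hinv : HasDerivAt (fun s : ℝ => 1/s) (-(s^2)⁻¹) s := by
    simpa only [one_div] using hasDerivAt_inv hs
  have hr : Real.sqrt ((s^2-a^2)*(s^2-b^2)) ≠ 0 := (Real.sqrt_pos.mpr hP).ne'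
  refine (((hasDerivAt_id s).const_mul 2).sub (hinv.mul (hP'.sqrt hP.ne'))).congr_deriv ?_
  field_simp
  linear_combination Real.sq_sqrt hP.le

theorem sq_sub_mul_sq_sub_pos (hb : 0 < b) (hba : b < a) (has : a < s) :
    0 < (s^2-a^2)*(s^2-b^2) :=
  mul_pos (by nlinarith) (by nlinarith)

theorem energy_deriv_eq_zero_iff (hb : 0 < b) (hba : b < a) (has : a < s) :
    2 - (s^4 - a^2*b^2) / (s^2 * Real.sqrt ((s^2-a^2)*(s^2-b^2))) = 0 ↔
      3*s^8 - 4*(a^2+b^2)*s^6 + 6*a^2*b^2*s^4 - a^4*b^4 = 0 := by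
  have hP := sq_sub_mul_sq_sub_pos hb hba has
  set r := Real.sqrt ((s^2-a^2)*(s^2-b^2))
  have hr : 0 < r := Real.sqrt_pos.mpr hP
  have ha : 0 < a := hb.trans hba
  have hs : 0 < s := ha.trans has
  have hq : 0 < s^4 - a^2*b^2 := by
    have : a * b < s * s := mul_lt_mul'' has (hba.trans has) ha.le hb.le
    nlinarith [mul_pos ha hb]
  calc 2 - (s^4 - a^2*b^2) / (s^2 * r) = 0
      ↔ 2 * s^2 * r = s^4 - a^2*b^2 := by
        rw [sub_eq_zero, eq_comm, div_eq_iff (by positivity), mul_assoc, eq_comm]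
    _ ↔ (2 * s^2 * r)^2 = (s^4 - a^2*b^2)^2 := (sq_eq_sq₀ (by positivity) hq.le).symm
    _ ↔ 3*s^8 - 4*(a^2+b^2)*s^6 + 6*a^2*b^2*s^4 - a^4*b^4 = 0 := by
        rw [mul_pow, Real.sq_sqrt hP.le]
        constructor <;> intro h <;> linear_combination h

end Kovalevskaya

end

open Kovalevskaya in
theorem stmt_2 (a b : ℝ) (hb : 0 < b) (hba : b < a) :
    (∀ s ∈ Set.Ioi a, DifferentiableAt ℝ
        (fun s : ℝ => 2*s - (1/s) * Real.sqrt ((s^2-a^2)*(s^2-b^2))) s) ∧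
    (∀ s ∈ Set.Ioi a,
      deriv (fun s : ℝ => 2*s - (1/s) * Real.sqrt ((s^2-a^2)*(s^2-b^2))) s = 0
      ↔ 3*s^8 - 4*(a^2+b^2)*s^6 + 6*a^2*b^2*s^4 - a^4*b^4 = 0) := by
  have hderiv : ∀ s ∈ Set.Ioi a, HasDerivAt (energy a b)
      (2 - (s^4 - a^2*b^2) / (s^2 * Real.sqrt ((s^2-a^2)*(s^2-b^2)))) s := fun s hs =>
    hasDerivAt_energy (hb.trans (hba.trans hs)).ne' (sq_sub_mul_sq_sub_pos hb hba hs)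
  refine ⟨fun s hs => (hderiv s hs).differentiableAt, fun s hs => ?_⟩
  change deriv (energy a b) s = 0 ↔ _
  rw [(hderiv s hs).deriv]
  exact energy_deriv_eq_zero_iff hb hba hs
end

section
/- The function K(ω, α, β) = (ω₁²−ω₂²+α₁−β₂)² + (2ω₁ω₂+α₂+β₁)² is a first integral of the system 2ω̇₁=ω₂ω₃+β₃, 2ω̇₂=−ω₁ω₃−α₃, ω̇₃=α₂−β₁, α̇₁=α₂ω₃−α₃ω₂, α̇₂=ω₁α₃−ω₃α₁, α̇₃=α₁ω₂−α₂ω₁, β̇₁=β₂ω₃−ω₂β₃, β̇₂=ω₁β₃−ω₃β₁, β̇₃=β₁ω₂−β₂ω₁; that is, the derivative of K along this vector field is identically zero on ℝ⁹. -/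
/-!
With `u = ω₁² - ω₂² + α₁ - β₂` and `v = 2ω₁ω₂ + α₂ + β₁`, the equations of motion give
`u̇ = ω₃ v` and `v̇ = -ω₃ u`: the complex quantity `u + i v` is only rotated by the flow,
so its squared modulus `K = u² + v²` is conserved.
-/

theorem hasDerivAt_sq_add_sq_of_rotation {u v : ℝ → ℝ} {c t : ℝ}
    (hu : HasDerivAt u (c * v t) t) (hv : HasDerivAt v (-(c * u t)) t) :
    HasDerivAt (fun s => u s ^ 2 + v s ^ 2) 0 t := by
  refine ((hu.pow 2).add (hv.pow 2)).congr_deriv ?_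
  push_cast
  ring

section KovalevskayaTop

variable {w1 w2 w3 a1 a2 a3 b1 b2 b3 : ℝ → ℝ} {t : ℝ}

theorem hasDerivAt_kovalevskaya_re
    (hw1 : HasDerivAt w1 ((w2 t * w3 t + b3 t) / 2) t)
    (hw2 : HasDerivAt w2 ((-(w1 t * w3 t) - a3 t) / 2) t)
    (ha1 : HasDerivAt a1 (a2 t * w3 t - a3 t * w2 t) t)
    (hb2 : HasDerivAt b2 (w1 t * b3 t - w3 t * b1 t) t) :
    HasDerivAt (fun s => w1 s ^ 2 - w2 s ^ 2 + a1 s - b2 s)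
      (w3 t * (2 * w1 t * w2 t + a2 t + b1 t)) t := by
  refine ((((hw1.pow 2).sub (hw2.pow 2)).add ha1).sub hb2).congr_deriv ?_
  push_cast
  ring

theorem hasDerivAt_kovalevskaya_im
    (hw1 : HasDerivAt w1 ((w2 t * w3 t + b3 t) / 2) t)
    (hw2 : HasDerivAt w2 ((-(w1 t * w3 t) - a3 t) / 2) t)
    (ha2 : HasDerivAt a2 (w1 t * a3 t - w3 t * a1 t) t)
    (hb1 : HasDerivAt b1 (b2 t * w3 t - w2 t * b3 t) t) :
    HasDerivAt (fun s => 2 * w1 s * w2 s + a2 s + b1 s)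
      (-(w3 t * (w1 t ^ 2 - w2 t ^ 2 + a1 t - b2 t))) t := by
  refine ((((hw1.const_mul 2).mul hw2).add ha2).add hb1).congr_deriv ?_
  ring

end KovalevskayaTop

theorem stmt_3_general
    (w1 w2 w3 a1 a2 a3 b1 b2 b3 : ℝ → ℝ)
    (hw1 : ∀ t, HasDerivAt w1 ((w2 t * w3 t + b3 t) / 2) t)
    (hw2 : ∀ t, HasDerivAt w2 ((-(w1 t * w3 t) - a3 t) / 2) t)
    (ha1 : ∀ t, HasDerivAt a1 (a2 t * w3 t - a3 t * w2 t) t)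
    (ha2 : ∀ t, HasDerivAt a2 (w1 t * a3 t - w3 t * a1 t) t)
    (hb1 : ∀ t, HasDerivAt b1 (b2 t * w3 t - w2 t * b3 t) t)
    (hb2 : ∀ t, HasDerivAt b2 (w1 t * b3 t - w3 t * b1 t) t) :
    ∀ t, HasDerivAt
      (fun t => ((w1 t)^2 - (w2 t)^2 + a1 t - b2 t)^2
              + (2 * w1 t * w2 t + a2 t + b1 t)^2) 0 t := fun t =>
  hasDerivAt_sq_add_sq_of_rotation
    (hasDerivAt_kovalevskaya_re (hw1 t) (hw2 t) (ha1 t) (hb2 t))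
    (hasDerivAt_kovalevskaya_im (hw1 t) (hw2 t) (ha2 t) (hb1 t))

theorem stmt_3
    (w1 w2 w3 a1 a2 a3 b1 b2 b3 : ℝ → ℝ)
    (hw1 : ∀ t, HasDerivAt w1 ((w2 t * w3 t + b3 t) / 2) t)
    (hw2 : ∀ t, HasDerivAt w2 ((-(w1 t * w3 t) - a3 t) / 2) t)
    (hw3 : ∀ t, HasDerivAt w3 (a2 t - b1 t) t)
    (ha1 : ∀ t, HasDerivAt a1 (a2 t * w3 t - a3 t * w2 t) t)
    (ha2 : ∀ t, HasDerivAt a2 (w1 t * a3 t - w3 t * a1 t) t)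
    (ha3 : ∀ t, HasDerivAt a3 (a1 t * w2 t - a2 t * w1 t) t)
    (hb1 : ∀ t, HasDerivAt b1 (b2 t * w3 t - w2 t * b3 t) t)
    (hb2 : ∀ t, HasDerivAt b2 (w1 t * b3 t - w3 t * b1 t) t)
    (hb3 : ∀ t, HasDerivAt b3 (b1 t * w2 t - b2 t * w1 t) t) :
    ∀ t, HasDerivAt
      (fun t => ((w1 t)^2 - (w2 t)^2 + a1 t - b2 t)^2
              + (2 * w1 t * w2 t + a2 t + b1 t)^2) 0 t :=
  stmt_3_general w1 w2 w3 a1 a2 a3 b1 b2 b3 hw1 hw2 ha1 ha2 hb1 hb2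
end

section
/- Let a, b be real and define θ : ℝ → ℝ as a solution of the pendulum equation θ'' = −(a+b) sin θ. Then the curve t ↦ (ω, α, β) with ω = (0, 0, θ'(t)), α = a(cos θ(t), −sin θ(t), 0), β = b(sin θ(t), cos θ(t), 0) is a solution of the system 2ω̇₁=ω₂ω₃+β₃, 2ω̇₂=−ω₁ω₃−α₃, ω̇₃=α₂−β₁, α̇₁=α₂ω₃−α₃ω₂, α̇₂=ω₁α₃−ω₃α₁, α̇₃=α₁ω₂−α₂ω₁, β̇₁=β₂ω₃−ω₂β₃, β̇₂=ω₁β₃−ω₃β₁, β̇₃=β₁ω₂−β₂ω₁. -/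
/-! The only nontrivial equation is `ω̇₃ = α₂ − β₁ = −(a + b) sin θ`, which is the pendulum
equation; the Poisson equations for `α` and `β` are the chain rule for `cos θ` and `sin θ`,
and all remaining components are constant zero. -/

open Real

lemma hasDerivAt_const_of_eq_zero {𝕜 F : Type*} [NontriviallyNormedField 𝕜] [NormedAddCommGroup F]
    [NormedSpace 𝕜 F] {f' : F} (x : 𝕜) (c : F) (h : f' = 0) :
    HasDerivAt (fun _ : 𝕜 => c) f' x :=
  h ▸ hasDerivAt_const x c

section

variable {θ : ℝ → ℝ} {dθ x : ℝ}

lemma hasDerivAt_const_mul_cos_comp (c : ℝ) (hθ : HasDerivAt θ dθ x) :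
    HasDerivAt (fun t => c * cos (θ t)) (-(c * sin (θ x)) * dθ) x :=
  (hθ.cos.const_mul c).congr_deriv (by ring)

lemma hasDerivAt_const_mul_sin_comp (c : ℝ) (hθ : HasDerivAt θ dθ x) :
    HasDerivAt (fun t => c * sin (θ t)) (c * cos (θ x) * dθ) x :=
  (hθ.sin.const_mul c).congr_deriv (by ring)

end

theorem stmt_8 (a b : ℝ) (θ θ' : ℝ → ℝ)
    (hθ : ∀ t, HasDerivAt θ (θ' t) t)
    (hθ' : ∀ t, HasDerivAt θ' (-(a+b) * Real.sin (θ t)) t) :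
    -- components: ω = (0,0,θ'), α = a(cos θ, −sin θ, 0), β = b(sin θ, cos θ, 0)
    (∀ t, HasDerivAt (fun _ : ℝ => (0:ℝ))
        (((0:ℝ) * (θ' t) + b * 0) / 2) t) ∧
    (∀ t, HasDerivAt (fun _ : ℝ => (0:ℝ))
        ((-(0 * θ' t) - a * 0) / 2) t) ∧
    (∀ t, HasDerivAt (fun t => θ' t)
        ((-(a * Real.sin (θ t))) - b * Real.sin (θ t)) t) ∧
    (∀ t, HasDerivAt (fun t => a * Real.cos (θ t))
        ((-(a * Real.sin (θ t))) * θ' t - a * 0 * 0) t) ∧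
    (∀ t, HasDerivAt (fun t => -(a * Real.sin (θ t)))
        (0 * (a * 0) - θ' t * (a * Real.cos (θ t))) t) ∧
    (∀ t, HasDerivAt (fun _ : ℝ => a * (0:ℝ))
        (a * Real.cos (θ t) * 0 - (-(a * Real.sin (θ t))) * 0) t) ∧
    (∀ t, HasDerivAt (fun t => b * Real.sin (θ t))
        (b * Real.cos (θ t) * θ' t - 0 * (b * 0)) t) ∧
    (∀ t, HasDerivAt (fun t => b * Real.cos (θ t))
        (0 * (b * 0) - θ' t * (b * Real.sin (θ t))) t) ∧
    (∀ t, HasDerivAt (fun _ : ℝ => b * (0:ℝ))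
        (b * Real.sin (θ t) * 0 - b * Real.cos (θ t) * 0) t) := by
  refine ⟨fun t => hasDerivAt_const_of_eq_zero t _ (by ring),
    fun t => hasDerivAt_const_of_eq_zero t _ (by ring),
    fun t => (hθ' t).congr_deriv (by ring),
    fun t => (hasDerivAt_const_mul_cos_comp a (hθ t)).congr_deriv (by ring),
    fun t => (hasDerivAt_const_mul_sin_comp a (hθ t)).neg.congr_deriv (by ring),
    fun t => hasDerivAt_const_of_eq_zero t _ (by ring),
    fun t => (hasDerivAt_const_mul_sin_comp b (hθ t)).congr_deriv (by ring),
    fun t => (hasDerivAt_const_mul_cos_comp b (hθ t)).congr_deriv (by ring),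
    fun t => hasDerivAt_const_of_eq_zero t _ (by ring)⟩
end

section
/- Let F(ω, α, β) = ω₃(ω₁² + ω₂²) + 2(α₃ω₁ + β₃ω₂). Along the flow of the system 2ω̇₁=ω₂ω₃+β₃, 2ω̇₂=−ω₁ω₃−α₃, ω̇₃=α₂−β₁, α̇₁=α₂ω₃−α₃ω₂, α̇₂=ω₁α₃−ω₃α₁, α̇₃=α₁ω₂−α₂ω₁, β̇₁=β₂ω₃−ω₂β₃, β̇₂=ω₁β₃−ω₃β₁, β̇₃=β₁ω₂−β₂ω₁, the derivative of F vanishes at every point where ω₁²−ω₂²+α₁−β₂ = 0 and 2ω₁ω₂+α₂+β₁ = 0. -/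
/-!
Along the flow the terms of `Ḟ` containing `ω₃`, `α₃`, `β₃` cancel, and what remains is
`Ḟ = -Im (z̄² ξ)` with `z = ω₁ + i ω₂` and `ξ = (α₁ - β₂) + i (α₂ + β₁)`. The two conditions
defining `M₁` say exactly `ξ = -z²`, so `z̄² ξ = -|z|⁴` is real and `Ḟ = 0`.
-/

theorem hasDerivAt_partialIntegral {w1 w2 w3 a3 b3 : ℝ → ℝ} {a1 a2 b1 b2 t : ℝ}
    (hw1 : HasDerivAt w1 ((w2 t * w3 t + b3 t) / 2) t)
    (hw2 : HasDerivAt w2 ((-(w1 t * w3 t) - a3 t) / 2) t)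
    (hw3 : HasDerivAt w3 (a2 - b1) t)
    (ha3 : HasDerivAt a3 (a1 * w2 t - a2 * w1 t) t)
    (hb3 : HasDerivAt b3 (b1 * w2 t - b2 * w1 t) t) :
    HasDerivAt (fun t => w3 t * ((w1 t)^2 + (w2 t)^2) + 2 * (a3 t * w1 t + b3 t * w2 t))
      (2 * w1 t * w2 t * (a1 - b2) - (w1 t ^ 2 - w2 t ^ 2) * (a2 + b1)) t := by
  have h := (hw3.mul ((hw1.pow 2).add (hw2.pow 2))).add
    (((ha3.mul hw1).add (hb3.mul hw2)).const_mul 2)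
  exact h.congr_deriv (by simp only [Pi.add_apply, Pi.pow_apply]; ring)

theorem stmt_17_general
    (w1 w2 w3 a1 a2 a3 b1 b2 b3 : ℝ → ℝ)
    (hw1 : ∀ t, HasDerivAt w1 ((w2 t * w3 t + b3 t) / 2) t)
    (hw2 : ∀ t, HasDerivAt w2 ((-(w1 t * w3 t) - a3 t) / 2) t)
    (hw3 : ∀ t, HasDerivAt w3 (a2 t - b1 t) t)
    (ha3 : ∀ t, HasDerivAt a3 (a1 t * w2 t - a2 t * w1 t) t)
    (hb3 : ∀ t, HasDerivAt b3 (b1 t * w2 t - b2 t * w1 t) t)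
    (t : ℝ)
    (hc1 : (w1 t)^2 - (w2 t)^2 + a1 t - b2 t = 0)
    (hc2 : 2 * w1 t * w2 t + a2 t + b1 t = 0) :
    HasDerivAt
      (fun t => w3 t * ((w1 t)^2 + (w2 t)^2)
              + 2 * (a3 t * w1 t + b3 t * w2 t)) 0 t :=
  (hasDerivAt_partialIntegral (hw1 t) (hw2 t) (hw3 t) (ha3 t) (hb3 t)).congr_deriv
    (by linear_combination 2 * w1 t * w2 t * hc1 - (w1 t ^ 2 - w2 t ^ 2) * hc2)

theorem stmt_17
    (w1 w2 w3 a1 a2 a3 b1 b2 b3 : ℝ → ℝ)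
    (hw1 : ∀ t, HasDerivAt w1 ((w2 t * w3 t + b3 t) / 2) t)
    (hw2 : ∀ t, HasDerivAt w2 ((-(w1 t * w3 t) - a3 t) / 2) t)
    (hw3 : ∀ t, HasDerivAt w3 (a2 t - b1 t) t)
    (ha1 : ∀ t, HasDerivAt a1 (a2 t * w3 t - a3 t * w2 t) t)
    (ha2 : ∀ t, HasDerivAt a2 (w1 t * a3 t - w3 t * a1 t) t)
    (ha3 : ∀ t, HasDerivAt a3 (a1 t * w2 t - a2 t * w1 t) t)
    (hb1 : ∀ t, HasDerivAt b1 (b2 t * w3 t - w2 t * b3 t) t)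
    (hb2 : ∀ t, HasDerivAt b2 (w1 t * b3 t - w3 t * b1 t) t)
    (hb3 : ∀ t, HasDerivAt b3 (b1 t * w2 t - b2 t * w1 t) t)
    (t : ℝ)
    (hc1 : (w1 t)^2 - (w2 t)^2 + a1 t - b2 t = 0)
    (hc2 : 2 * w1 t * w2 t + a2 t + b1 t = 0) :
    HasDerivAt
      (fun t => w3 t * ((w1 t)^2 + (w2 t)^2)
              + 2 * (a3 t * w1 t + b3 t * w2 t)) 0 t :=
  stmt_17_general w1 w2 w3 a1 a2 a3 b1 b2 b3 hw1 hw2 hw3 ha3 hb3 t hc1 hc2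
end

section
/- For 0 < b < a and s > a, define h(s) = 2s − (1/s)√((s²−a²)(s²−b²)), and let s₀ be the unique root in (a,∞) of 3s^8 − 4(a²+b²)s^6 + 6a²b²s^4 − a⁴b⁴ = 0. Then s₀ ≤ (2/√3)·a. -/
/-!
In `t = s²` the octic becomes the quartic `P(t) = 3t⁴ - 4(a²+b²)t³ + 6a²b²t² - a⁴b⁴`.
Dividing `27 P` by `3t - 4a²` leaves the remainder `a⁴b²(32a² - 27b²) ≥ 0`, and for `b² ≤ a²` the
quotient is positive once `3t > 4a²`. Hence `P > 0` beyond `t = 4a²/3`, so every root satisfies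
`3s² ≤ 4a²`.
-/

def cuspQuartic (a b t : ℝ) : ℝ :=
  3 * t ^ 4 - 4 * (a ^ 2 + b ^ 2) * t ^ 3 + 6 * a ^ 2 * b ^ 2 * t ^ 2 - a ^ 4 * b ^ 4

theorem cuspQuartic_division (a b t : ℝ) :
    27 * cuspQuartic a b t =
      (3 * t - 4 * a ^ 2) * (9 * t ^ 2 * (3 * t - 4 * b ^ 2) + 6 * a ^ 2 * b ^ 2 * t + 8 * a ^ 4 * b ^ 2)
        + a ^ 4 * b ^ 2 * (32 * a ^ 2 - 27 * b ^ 2) := by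
  unfold cuspQuartic
  ring

theorem cuspQuartic_pos {a b t : ℝ} (hab : b ^ 2 ≤ a ^ 2) (ht : 4 * a ^ 2 < 3 * t) :
    0 < cuspQuartic a b t := by
  have ht₀ : 0 < t := by nlinarith [sq_nonneg a]
  have hquot : 0 < 9 * t ^ 2 * (3 * t - 4 * b ^ 2) + 6 * a ^ 2 * b ^ 2 * t + 8 * a ^ 4 * b ^ 2 := by
    have : 0 < 9 * t ^ 2 * (3 * t - 4 * b ^ 2) := by
      apply mul_pos (by positivity); linarith
    positivity
  have hrem : 0 ≤ a ^ 4 * b ^ 2 * (32 * a ^ 2 - 27 * b ^ 2) := by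
    apply mul_nonneg (by positivity); nlinarith [sq_nonneg a]
  have := cuspQuartic_division a b t
  nlinarith [mul_pos (sub_pos.mpr ht) hquot]

theorem le_two_div_sqrt_three_mul {a s : ℝ} (ha : 0 ≤ a) (hs : 3 * s ^ 2 ≤ 4 * a ^ 2) :
    s ≤ 2 / Real.sqrt 3 * a := by
  have h3 : 0 < Real.sqrt 3 := by positivity
  rw [div_mul_eq_mul_div, le_div_iff₀ h3]
  apply abs_le_of_sq_le_sq' _ (by positivity) |>.2
  rw [mul_pow, Real.sq_sqrt (by norm_num)]
  linarith

theorem stmt_19_general (a b : ℝ) (hb : 0 < b) (hba : b < a) (s₀ : ℝ)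
    (hs₀ : s₀ ∈ Set.Ioi a ∧
      3*s₀^8 - 4*(a^2+b^2)*s₀^6 + 6*a^2*b^2*s₀^4 - a^4*b^4 = 0) :
    s₀ ≤ (2 / Real.sqrt 3) * a := by
  obtain ⟨-, hroot⟩ := hs₀
  have hab : b ^ 2 ≤ a ^ 2 := pow_le_pow_left₀ hb.le hba.le 2
  apply le_two_div_sqrt_three_mul (hb.trans hba).le
  by_contra! hbig
  have hzero : cuspQuartic a b (s₀ ^ 2) = 0 := by
    rw [cuspQuartic]
    linear_combination hroot
  exact (cuspQuartic_pos hab hbig).ne' hzero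

theorem stmt_19 (a b : ℝ) (hb : 0 < b) (hba : b < a) (s₀ : ℝ)
    (hs₀ : s₀ ∈ Set.Ioi a ∧
      3*s₀^8 - 4*(a^2+b^2)*s₀^6 + 6*a^2*b^2*s₀^4 - a^4*b^4 = 0)
    (huniq : ∀ s ∈ Set.Ioi a,
      3*s^8 - 4*(a^2+b^2)*s^6 + 6*a^2*b^2*s^4 - a^4*b^4 = 0 → s = s₀) :
    s₀ ≤ (2 / Real.sqrt 3) * a :=
  stmt_19_general a b hb hba s₀ hs₀
end
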